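/- Let A^t : E → E, t ∈ ℝ, be a family of linear maps on a normed space along an orbit, and suppose there exist C > 0 and 0 < θ < 1 and a splitting E = E⁻ ⊕ E⁺ such that ‖A^t|_{E⁻}‖ / ‖A^t|_{E⁺}‖ ≤ C θ^t for all t ≥ 0, and suppose further there exist K > 1 and β > 0 with: (i) the product ‖A^t|_{E⁺}‖·‖A^t|_{E⁻}‖ = (sin γ_0 / sin γ_t)·(c_0 / c_t) where K⁻¹ ≤ c_t ≤ K and γ_t ≥ β for all t. Then ‖A^t|_{E⁻}‖² ≤ K² (sin γ_0 / sin β) C θ^t for all t ≥ 0; in particular A^t contracts E⁻ uniformly exponentially. -/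

import Mathlib

open Real

/-- abstract version of the argument that a dominated splitting on a
regular compact energy surface yields uniform contraction. Here `a t = ‖A^t|_{E⁻}‖`,
`b t = ‖A^t|_{E⁺}‖`, `c t = ‖X_H(φ^t x)‖ ∈ [K⁻¹, K]`, `γ t` is the angle between the
splitting subspaces (in `[β, π/2]`), domination gives `a t / b t ≤ C θ^t`, and volume
preservation gives `a t · b t = (sin γ₀ / sin γ t) · (c₀ / c t)`. Conclusion:
`(a t)² ≤ K² (sin γ₀ / sin β) C θ^t` for all `t ≥ 0`. -/
theorem dominated_splitting_contraction_estimate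
    (a b c γ : ℝ → ℝ) (C θ K β : ℝ)
    (hC : 0 < C) (hθ0 : 0 < θ) (hθ1 : θ < 1)
    (hK : 1 < K) (hβ0 : 0 < β) (hβ : β ≤ Real.pi / 2)
    (hapos : ∀ t, 0 < a t) (hbpos : ∀ t, 0 < b t)
    (hc : ∀ t, K⁻¹ ≤ c t ∧ c t ≤ K)
    (hγ : ∀ t, β ≤ γ t ∧ γ t ≤ Real.pi / 2)
    (hdom : ∀ t, 0 ≤ t → a t / b t ≤ C * Real.rpow θ t)
    (hvol : ∀ t, a t * b t = (Real.sin (γ 0) / Real.sin (γ t)) * (c 0 / c t)) :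
    ∀ t, 0 ≤ t → (a t) ^ 2 ≤ K ^ 2 * (Real.sin (γ 0) / Real.sin β) * (C * Real.rpow θ t) := by
  intro t ht
  have hK0 : (0:ℝ) < K := lt_trans one_pos hK
  have hπ : Real.pi / 2 < Real.pi := by linarith [Real.pi_pos]
  have hsβ : 0 < Real.sin β := Real.sin_pos_of_pos_of_lt_pi hβ0 (lt_of_le_of_lt hβ hπ)
  have hsin : ∀ s, Real.sin β ≤ Real.sin (γ s) := by
    intro s
    obtain ⟨h1, h2⟩ := hγ s
    have := Real.strictMonoOn_sin.monotoneOn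
      (Set.mem_Icc.2 ⟨by linarith [Real.pi_pos], hβ⟩)
      (Set.mem_Icc.2 ⟨by linarith [Real.pi_pos], h2⟩) h1
    exact this
  have hsγ0 : 0 < Real.sin (γ 0) := lt_of_lt_of_le hsβ (hsin 0)
  have hsγt : 0 < Real.sin (γ t) := lt_of_lt_of_le hsβ (hsin t)
  have hct : 0 < c t := lt_of_lt_of_le (inv_pos.2 hK0) (hc t).1
  have hc0 : c 0 ≤ K := (hc 0).2
  -- bound on the product a t * b t
  have hprod : a t * b t ≤ (Real.sin (γ 0) / Real.sin β) * K ^ 2 := by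
    rw [hvol t]
    have h1 : Real.sin (γ 0) / Real.sin (γ t) ≤ Real.sin (γ 0) / Real.sin β :=
      div_le_div_of_nonneg_left hsγ0.le hsβ (hsin t)
    have h2 : c 0 / c t ≤ K ^ 2 := by
      have : c 0 / c t ≤ K / K⁻¹ :=
        div_le_div₀ hK0.le hc0 (inv_pos.2 hK0) (hc t).1
      calc c 0 / c t ≤ K / K⁻¹ := this
        _ = K ^ 2 := by field_simp
    have := mul_le_mul h1 h2 (div_nonneg (le_of_lt (lt_of_lt_of_le (inv_pos.2 hK0) (hc 0).1)) hct.le)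
      (div_nonneg hsγ0.le hsβ.le)
    linarith
  have hab : (a t) ^ 2 = (a t / b t) * (a t * b t) := by
    field_simp [(hbpos t).ne']
  have hθt : 0 < Real.rpow θ t := Real.rpow_pos_of_pos hθ0 t
  have habnn : 0 ≤ a t * b t := mul_nonneg (hapos t).le (hbpos t).le
  calc (a t) ^ 2 = (a t / b t) * (a t * b t) := hab
    _ ≤ (C * Real.rpow θ t) * ((Real.sin (γ 0) / Real.sin β) * K ^ 2) :=
        mul_le_mul (hdom t ht) hprod habnn (by positivity)
    _ = K ^ 2 * (Real.sin (γ 0) / Real.sin β) * (C * Real.rpow θ t) := by ring
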